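/- Let 1 ≤ λ₁ ≤ λ₂, a ∈ ℝ, b ≥ 0, θ ∈ (0,∞), and let M₂⁻ = {(n,m₁,m₂) ∈ ℤ³ : n < 0, 2^{nλ₁}|m₁| ≤ 2^{nλ₂}|m₂|, 2^{nλ₂}|m₂| ≤ 2^n}. Then ∑_{(n,m₁,m₂)∈M₂⁻} (2^{na}·2^{-bn})^θ < ∞ if and only if θ(a - b) + 2 - λ₁ - λ₂ > 0. -/

import Mathlib

def M2minus (l1 l2 : ℝ) : Set (ℤ × ℤ × ℤ) :=
  {p | p.1 < 0 ∧
    (2 : ℝ) ^ ((p.1 : ℝ) * l1) * |(p.2.1 : ℝ)| ≤ (2 : ℝ) ^ ((p.1 : ℝ) * l2) * |(p.2.2 : ℝ)| ∧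
    (2 : ℝ) ^ ((p.1 : ℝ) * l2) * |(p.2.2 : ℝ)| ≤ (2 : ℝ) ^ ((p.1 : ℝ))}

/-!
The summand depends only on `n`, so the series is `∑_{n<0} #F(n) · 2^{nθ(a-b)}`, where `F(n)` is
the set of `(m₁, m₂)` completing `n` to a point of `M₂⁻`. Dividing out powers of two,
`F(n) = {A|m₁| ≤ B|m₂|, |m₂| ≤ A}` with `A = 2^{|n|(λ₂-1)} ≥ 1` and `B = 2^{|n|(λ₁-1)} ≥ 1`, and such
a region contains between `AB/8` and `9AB` lattice points. So the series is comparable to the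
geometric series `∑_N 2^{-N(θ(a-b)+2-λ₁-λ₂)}`.
-/

open Set Real

theorem summable_subtype_iff_summable_ncard_fiber {α β : Type*} (M : Set (α × β))
    (hM : ∀ a, {b | (a, b) ∈ M}.Finite) {w : α → ℝ} (hw : 0 ≤ w) :
    Summable (fun p : M => w (p : α × β).1) ↔
      Summable fun a => ({b | (a, b) ∈ M}.ncard : ℝ) * w a := by
  have hfiber (a : α) : (fun b => M.indicator (fun p => w p.1) (a, b)) =
      {b | (a, b) ∈ M}.indicator fun _ => w a := by
    ext b
    by_cases h : (a, b) ∈ M <;> simp [h]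
  refine (summable_subtype_iff_indicator (f := fun p : α × β => w p.1)).trans ?_
  rw [summable_prod_of_nonneg (indicator_nonneg fun p _ => hw p.1)]
  simp only [hfiber, ← tsum_subtype, tsum_const, nsmul_eq_mul, Nat.card_coe_set_eq]
  exact and_iff_right fun a => summable_subtype_iff_indicator.mp ((hM a).summable _)

lemma summable_iff_lt_one_of_geometric_bounds {g : ℕ → ℝ} {c C r : ℝ} (hc : 0 < c) (hr : 0 ≤ r)
    (hg : ∀ N, c * r ^ N ≤ g N ∧ g N ≤ C * r ^ N) : Summable g ↔ r < 1 := by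
  constructor
  · intro hsum
    have hcr : Summable fun N => c * r ^ N :=
      hsum.of_nonneg_of_le (fun N => by positivity) fun N => (hg N).1
    simpa [abs_of_nonneg hr] using
      summable_geometric_iff_norm_lt_one.mp ((summable_mul_left_iff hc.ne').mp hcr)
  · intro hr1
    exact ((summable_geometric_of_lt_one hr hr1).mul_left C).of_nonneg_of_le
      (fun N => (mul_nonneg hc.le (pow_nonneg hr N)).trans (hg N).1) fun N => (hg N).2

lemma card_Icc_neg_floor_floor_le {x : ℝ} (hx : 1 ≤ x) :
    ((Finset.Icc (-⌊x⌋) ⌊x⌋).card : ℝ) ≤ 3 * x := by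
  have h0 : 0 ≤ ⌊x⌋ := Int.floor_nonneg.mpr (by linarith)
  have hcard : ((Finset.Icc (-⌊x⌋) ⌊x⌋).card : ℤ) = 2 * ⌊x⌋ + 1 := by
    rw [Int.card_Icc_of_le _ _ (by omega)]; ring
  have hcardR : ((Finset.Icc (-⌊x⌋) ⌊x⌋).card : ℝ) = 2 * ⌊x⌋ + 1 := by exact_mod_cast hcard
  linarith [Int.floor_le x]

lemma le_card_Icc_zero_floor {y : ℝ} (hy : 0 ≤ y) : y ≤ ((Finset.Icc 0 ⌊y⌋).card : ℝ) := by
  have h0 : 0 ≤ ⌊y⌋ := Int.floor_nonneg.mpr hy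
  have hcard : ((Finset.Icc 0 ⌊y⌋).card : ℤ) = ⌊y⌋ + 1 := by
    rw [Int.card_Icc_of_le _ _ (by omega)]; ring
  have hcardR : ((Finset.Icc 0 ⌊y⌋).card : ℝ) = ⌊y⌋ + 1 := by exact_mod_cast hcard
  linarith [Int.lt_floor_add_one y]

lemma le_card_Ioc_floor_half_floor {x : ℝ} (hx : 1 ≤ x) :
    x / 4 ≤ ((Finset.Ioc ⌊x / 2⌋ ⌊x⌋).card : ℝ) := by
  have hhalf : ⌊x / 2⌋ < ⌊x⌋ := by
    rw [← Int.add_one_le_iff, Int.le_floor, Int.cast_add, Int.cast_one]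
    have hk := Int.floor_le (x / 2)
    rcases le_or_gt ⌊x / 2⌋ 0 with h | h
    · have : (⌊x / 2⌋ : ℝ) ≤ 0 := by exact_mod_cast h
      linarith
    · have : (1 : ℝ) ≤ ⌊x / 2⌋ := by exact_mod_cast h
      linarith
  have hcard : ((Finset.Ioc ⌊x / 2⌋ ⌊x⌋).card : ℤ) = ⌊x⌋ - ⌊x / 2⌋ :=
    Int.card_Ioc_of_le _ _ hhalf.le
  have hcardR : ((Finset.Ioc ⌊x / 2⌋ ⌊x⌋).card : ℝ) = ⌊x⌋ - ⌊x / 2⌋ := by exact_mod_cast hcard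
  have hone : (1 : ℝ) ≤ ⌊x⌋ - ⌊x / 2⌋ := by exact_mod_cast (by omega : (1 : ℤ) ≤ ⌊x⌋ - ⌊x / 2⌋)
  rw [hcardR]
  rcases le_total x 4 with h | h
  · linarith
  · linarith [Int.sub_one_lt_floor x, Int.floor_le (x / 2)]

lemma mem_Icc_neg_floor_floor_of_abs_le {m : ℤ} {x : ℝ} (h : |(m : ℝ)| ≤ x) :
    m ∈ Finset.Icc (-⌊x⌋) ⌊x⌋ := by
  obtain ⟨hlo, hhi⟩ := abs_le.mp h
  rw [Finset.mem_Icc, neg_le, Int.le_floor, Int.le_floor, Int.cast_neg]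
  exact ⟨by linarith, hhi⟩

def latticeRegion (A B : ℝ) : Set (ℤ × ℤ) :=
  {m | A * |(m.1 : ℝ)| ≤ B * |(m.2 : ℝ)| ∧ |(m.2 : ℝ)| ≤ A}

section latticeRegion

variable {A B : ℝ}

lemma latticeRegion_subset_box (hA : 0 < A) (hB : 0 ≤ B) :
    latticeRegion A B ⊆ ↑(Finset.Icc (-⌊B⌋) ⌊B⌋ ×ˢ Finset.Icc (-⌊A⌋) ⌊A⌋) := by
  rintro ⟨m₁, m₂⟩ ⟨h₁, h₂⟩
  have hm₁ : |(m₁ : ℝ)| ≤ B := le_of_mul_le_mul_left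
    (h₁.trans (by rw [mul_comm A]; exact mul_le_mul_of_nonneg_left h₂ hB)) hA
  simp only [Finset.coe_product, mem_prod, Finset.mem_coe]
  exact ⟨mem_Icc_neg_floor_floor_of_abs_le hm₁, mem_Icc_neg_floor_floor_of_abs_le h₂⟩

lemma latticeRegion_finite (hA : 0 < A) (hB : 0 ≤ B) : (latticeRegion A B).Finite :=
  (Finset.finite_toSet _).subset (latticeRegion_subset_box hA hB)

lemma ncard_latticeRegion_le (hA : 1 ≤ A) (hB : 1 ≤ B) :
    ((latticeRegion A B).ncard : ℝ) ≤ 9 * (A * B) := by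
  have hsub := Set.ncard_le_ncard
    (latticeRegion_subset_box (A := A) (B := B) (by linarith) (by linarith))
    (Finset.finite_toSet _)
  rw [Set.ncard_coe_finset, Finset.card_product] at hsub
  calc ((latticeRegion A B).ncard : ℝ)
      ≤ (Finset.Icc (-⌊B⌋) ⌊B⌋).card * (Finset.Icc (-⌊A⌋) ⌊A⌋).card := by exact_mod_cast hsub
    _ ≤ (3 * B) * (3 * A) := mul_le_mul (card_Icc_neg_floor_floor_le hB)
        (card_Icc_neg_floor_floor_le hA) (Nat.cast_nonneg _) (by linarith)
    _ = 9 * (A * B) := by ring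

lemma Icc_zero_floor_prod_Ioc_subset_latticeRegion (hA : 0 < A) (hB : 0 ≤ B) :
    ↑(Finset.Icc 0 ⌊B / 2⌋ ×ˢ Finset.Ioc ⌊A / 2⌋ ⌊A⌋) ⊆ latticeRegion A B := by
  rintro ⟨m₁, m₂⟩ hm
  simp only [Finset.coe_product, mem_prod, Finset.mem_coe, Finset.mem_Icc, Finset.mem_Ioc] at hm
  obtain ⟨⟨hm₁0, hm₁⟩, hm₂lo, hm₂hi⟩ := hm
  have hm₁R : (0 : ℝ) ≤ m₁ ∧ (m₁ : ℝ) ≤ B / 2 :=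
    ⟨by exact_mod_cast hm₁0, (Int.le_floor.mp hm₁)⟩
  have hm₂R : A / 2 < m₂ ∧ (m₂ : ℝ) ≤ A :=
    ⟨Int.floor_lt.mp hm₂lo, Int.le_floor.mp hm₂hi⟩
  have hm₂0 : (0 : ℝ) ≤ m₂ := by linarith
  refine ⟨?_, ?_⟩ <;> simp only [abs_of_nonneg hm₁R.1, abs_of_nonneg hm₂0]
  · nlinarith
  · exact hm₂R.2

lemma le_ncard_latticeRegion (hA : 1 ≤ A) (hB : 0 ≤ B) :
    A * B / 8 ≤ (latticeRegion A B).ncard := by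
  have hA0 : 0 < A := by linarith
  have hsup := Set.ncard_le_ncard (Icc_zero_floor_prod_Ioc_subset_latticeRegion hA0 hB)
    (latticeRegion_finite hA0 hB)
  rw [Set.ncard_coe_finset, Finset.card_product] at hsup
  calc A * B / 8 = (B / 2) * (A / 4) := by ring
    _ ≤ (Finset.Icc 0 ⌊B / 2⌋).card * (Finset.Ioc ⌊A / 2⌋ ⌊A⌋).card :=
        mul_le_mul (le_card_Icc_zero_floor (by linarith)) (le_card_Ioc_floor_half_floor hA)
          (by linarith) (Nat.cast_nonneg _)
    _ ≤ (latticeRegion A B).ncard := by exact_mod_cast hsup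

end latticeRegion

lemma two_rpow_neg_natCast_mul (k : ℕ) (x : ℝ) :
    (2 : ℝ) ^ (((-k : ℤ) : ℝ) * x) = ((2 : ℝ) ^ (-x)) ^ k := by
  rw [← rpow_natCast, ← rpow_mul zero_le_two]; push_cast; ring_nf

section M2minus

variable (l1 l2 : ℝ)

lemma fiber_M2minus_of_nonneg {n : ℤ} (hn : 0 ≤ n) : {m : ℤ × ℤ | (n, m) ∈ M2minus l1 l2} = ∅ :=
  eq_empty_of_forall_notMem fun _ hm => hm.1.not_ge hn

lemma fiber_M2minus_of_neg {n : ℤ} (hn : n < 0) :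
    {m : ℤ × ℤ | (n, m) ∈ M2minus l1 l2} =
      latticeRegion (2 ^ ((n : ℝ) * (1 - l2))) (2 ^ ((n : ℝ) * (1 - l1))) := by
  have hshift (c x y u v : ℝ) : 2 ^ x * u ≤ 2 ^ y * v ↔ 2 ^ (x + c) * u ≤ 2 ^ (y + c) * v := by
    rw [rpow_add two_pos, rpow_add two_pos, mul_right_comm, mul_right_comm (2 ^ y)]
    exact (mul_le_mul_iff_of_pos_right (by positivity)).symm
  ext ⟨m₁, m₂⟩
  simp only [mem_ofPred_eq, M2minus, latticeRegion, hn, true_and]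
  congr! 1
  · rw [hshift ((n : ℝ) * (1 - l1 - l2))]
    ring_nf
  · rw [← mul_one ((2 : ℝ) ^ (n : ℝ)), hshift (-(n * l2)), ← one_mul |(m₂ : ℝ)|]
    ring_nf
    simp

lemma fiber_M2minus_finite (n : ℤ) : {m : ℤ × ℤ | (n, m) ∈ M2minus l1 l2}.Finite := by
  rcases lt_or_ge n 0 with hn | hn
  · rw [fiber_M2minus_of_neg l1 l2 hn]
    exact latticeRegion_finite (by positivity) (by positivity)
  · simp [fiber_M2minus_of_nonneg l1 l2 hn]

lemma fiber_M2minus_ncard_mul_bounds (h1 : 1 ≤ l1) (h2 : 1 ≤ l2) (s : ℝ) {n : ℤ} (hn : n < 0) :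
    (2 : ℝ) ^ ((n : ℝ) * (s + 2 - l1 - l2)) / 8 ≤
        {m : ℤ × ℤ | (n, m) ∈ M2minus l1 l2}.ncard * (2 : ℝ) ^ ((n : ℝ) * s) ∧
      {m : ℤ × ℤ | (n, m) ∈ M2minus l1 l2}.ncard * (2 : ℝ) ^ ((n : ℝ) * s) ≤
        9 * (2 : ℝ) ^ ((n : ℝ) * (s + 2 - l1 - l2)) := by
  have hn' : (n : ℝ) ≤ 0 := by exact_mod_cast hn.le
  have hA : 1 ≤ (2 : ℝ) ^ ((n : ℝ) * (1 - l2)) :=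
    one_le_rpow one_le_two (mul_nonneg_of_nonpos_of_nonpos hn' (by linarith))
  have hB : 1 ≤ (2 : ℝ) ^ ((n : ℝ) * (1 - l1)) :=
    one_le_rpow one_le_two (mul_nonneg_of_nonpos_of_nonpos hn' (by linarith))
  have hweight : 0 < (2 : ℝ) ^ ((n : ℝ) * s) := by positivity
  have hprod : (2 : ℝ) ^ ((n : ℝ) * (1 - l2)) * 2 ^ ((n : ℝ) * (1 - l1)) * 2 ^ ((n : ℝ) * s) =
      2 ^ ((n : ℝ) * (s + 2 - l1 - l2)) := by
    rw [← rpow_add two_pos, ← rpow_add two_pos]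
    ring_nf
  rw [fiber_M2minus_of_neg l1 l2 hn, ← hprod]
  constructor
  · rw [mul_div_right_comm]
    exact mul_le_mul_of_nonneg_right (le_ncard_latticeRegion hA (by linarith)) hweight.le
  · rw [← mul_assoc]
    exact mul_le_mul_of_nonneg_right (ncard_latticeRegion_le hA hB) hweight.le

lemma summable_two_rpow_M2minus_iff (h1 : 1 ≤ l1) (h2 : 1 ≤ l2) (s : ℝ) :
    Summable (fun p : M2minus l1 l2 => (2 : ℝ) ^ (((p : ℤ × ℤ × ℤ).1 : ℝ) * s)) ↔
      0 < s + 2 - l1 - l2 := by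
  rw [summable_subtype_iff_summable_ncard_fiber _ (fiber_M2minus_finite l1 l2)
      (w := fun n : ℤ => (2 : ℝ) ^ ((n : ℝ) * s)) fun n => (rpow_pos_of_pos two_pos _).le,
    summable_int_iff_summable_nat_and_neg]
  simp only [fiber_M2minus_of_nonneg l1 l2 (Int.natCast_nonneg _), ncard_empty, Nat.cast_zero,
    zero_mul, summable_zero, true_and]
  rw [← summable_nat_add_iff 1]
  have hr : 0 < (2 : ℝ) ^ (-(s + 2 - l1 - l2)) := by positivity
  rw [summable_iff_lt_one_of_geometric_bounds (c := 2 ^ (-(s + 2 - l1 - l2)) / 8)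
    (C := 9 * 2 ^ (-(s + 2 - l1 - l2))) (by positivity) hr.le fun N => ?_]
  · rw [← rpow_zero (2 : ℝ), rpow_lt_rpow_left_iff one_lt_two, neg_lt_zero]
  · obtain ⟨hlo, hhi⟩ := fiber_M2minus_ncard_mul_bounds l1 l2 h1 h2 s
      (n := -((N + 1 : ℕ) : ℤ)) (by omega)
    rw [two_rpow_neg_natCast_mul _ (s + 2 - l1 - l2), pow_succ] at hlo hhi
    constructor <;> linarith

end M2minus

theorem sum_M2minus_iff_general (l1 l2 a b θ : ℝ) (h1 : 1 ≤ l1) (h12 : l1 ≤ l2) :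
    Summable (fun p : M2minus l1 l2 =>
        ((2 : ℝ) ^ (((p : ℤ × ℤ × ℤ).1 : ℝ) * a) *
         (2 : ℝ) ^ (-(b * ((p : ℤ × ℤ × ℤ).1 : ℝ)))) ^ θ) ↔
      0 < θ * (a - b) + 2 - l1 - l2 := by
  have hterm (x : ℝ) : ((2 : ℝ) ^ (x * a) * 2 ^ (-(b * x))) ^ θ = 2 ^ (x * (θ * (a - b))) := by
    rw [← rpow_add two_pos, ← rpow_mul zero_le_two]
    ring_nf
  simp only [hterm]
  exact summable_two_rpow_M2minus_iff l1 l2 h1 (h1.trans h12) _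

theorem sum_M2minus_iff (l1 l2 a b θ : ℝ) (h1 : 1 ≤ l1) (h12 : l1 ≤ l2)
    (hb : 0 ≤ b) (hθ : 0 < θ) :
    Summable (fun p : M2minus l1 l2 =>
        ((2 : ℝ) ^ (((p : ℤ × ℤ × ℤ).1 : ℝ) * a) *
         (2 : ℝ) ^ (-(b * ((p : ℤ × ℤ × ℤ).1 : ℝ)))) ^ θ) ↔
      0 < θ * (a - b) + 2 - l1 - l2 :=
  sum_M2minus_iff_general l1 l2 a b θ h1 h12
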